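/- arXiv:1802.01254 — 2 statements merged into one kernel-verified Lean document; each statement's English description precedes it below -/
import Mathlib

section
/- Let a and a' be two address-independent traces of the same length n. If for every index t (1 ≤ t ≤ n) the reuse distance of access t in a equals the reuse distance of access t in a' (with infinite reuse distances matching infinite reuse distances), then a = a'. In other words, an address-independent trace is uniquely determined by its reuse-distance sequence. -/
open Finset

/-- The data set of a trace `a` of length `n` (indices 1..n). -/
def dataSet (a : ℕ → ℕ) (n : ℕ) : Finset ℕ := (Finset.Icc 1 n).image a

/-- A trace is address-independent: data items are numbered in order of first appearance. -/
def isAI (a : ℕ → ℕ) (n : ℕ) : Prop :=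
  ∀ t ∈ Finset.Icc 1 n, 1 ≤ a t ∧ a t ≤ 1 + ((Finset.Ico 1 t).image a).card

/-- Indices `s < t` (with `s ≥ 1`) accessing the same datum as `t`. -/
def prevSet (a : ℕ → ℕ) (t : ℕ) : Finset ℕ :=
  (Finset.Ico 1 t).filter (fun s => a s = a t)

/-- Reuse time of access `t`: `t - s*` where `s*` is the previous access to the same
datum, or `⊤` for a first access. -/
def reuseTime (a : ℕ → ℕ) (t : ℕ) : ℕ∞ :=
  if h : (prevSet a t).Nonempty then ((t - (prevSet a t).max' h : ℕ) : ℕ∞) else ⊤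

/-- Reuse distance of access `t`: the number of distinct data accessed in
`a(s*+1), …, a(t)` where `s*` is the previous access to the same datum,
or `⊤` for a first access. -/
def reuseDist (a : ℕ → ℕ) (t : ℕ) : ℕ∞ :=
  if h : (prevSet a t).Nonempty then
    ((((Finset.Icc ((prevSet a t).max' h + 1) t).image a).card : ℕ) : ℕ∞)
  else ⊤

/-- Reuse-time histogram: number of accesses whose reuse time equals `i`. -/
def rtHist (a : ℕ → ℕ) (n i : ℕ) : ℕ :=
  ((Finset.Icc 1 n).filter (fun t => reuseTime a t = (i : ℕ∞))).card

/-- Reuse-distance histogram: number of accesses whose reuse distance equals `v`. -/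
def rdHist (a : ℕ → ℕ) (n v : ℕ) : ℕ :=
  ((Finset.Icc 1 n).filter (fun t => reuseDist a t = (v : ℕ∞))).card

/-- First access time of datum `e`. -/
noncomputable def firstAcc (a : ℕ → ℕ) (n e : ℕ) : ℕ :=
  sInf {t | t ∈ Finset.Icc 1 n ∧ a t = e}

/-- Last access time of datum `e`. -/
noncomputable def lastAcc (a : ℕ → ℕ) (n e : ℕ) : ℕ :=
  sSup {t | t ∈ Finset.Icc 1 n ∧ a t = e}

/-- The sorted list of access times of datum `e` in the trace. -/
def occList (a : ℕ → ℕ) (n e : ℕ) : List ℕ :=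
  ((Finset.Icc 1 n).filter (fun t => a t = e)).sort (· ≤ ·)

/-- Working-set size `ω(t,x)`: distinct data accessed in the window `a(t-x+1), …, a(t)`. -/
def wss (a : ℕ → ℕ) (t x : ℕ) : ℕ := ((Finset.Icc (t - x + 1) t).image a).card

/-- Footprint: the average working-set size over all length-`x` windows. -/
def fp (a : ℕ → ℕ) (n x : ℕ) : ℚ :=
  (∑ t ∈ Finset.Icc x n, (wss a t x : ℚ)) / ((n : ℚ) - (x : ℚ) + 1)

/-- Total working-set size `W(x) = Σ_{t=x}^{n} ω(t,x)`, with `W(0) = 0`. -/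
def totalW (a : ℕ → ℕ) (n x : ℕ) : ℤ :=
  if x = 0 then 0 else ∑ t ∈ Finset.Icc x n, (wss a t x : ℤ)

/-- Steady-state footprint `ss-fp(x) = m - (1/n) Σ_{i=x+1}^{n-1} (i-x)·rt(i)`. -/
def ssfp (a : ℕ → ℕ) (n x : ℕ) : ℚ :=
  ((dataSet a n).card : ℚ)
    - (1 / (n : ℚ)) * ∑ i ∈ Finset.Icc (x + 1) (n - 1), ((i : ℚ) - (x : ℚ)) * (rtHist a n i : ℚ)

lemma ai_image_eq_Icc (a : ℕ → ℕ) (n : ℕ) (ha : isAI a n) :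
    ∀ t, t ≤ n + 1 → (Finset.Ico 1 t).image a = Finset.Icc 1 ((Finset.Ico 1 t).image a).card := by
  intro t
  induction t with
  | zero => simp
  | succ t ih =>
    intro ht
    rcases Nat.eq_zero_or_pos t with h0 | hpos
    · subst h0; simp
    · have htn : t ≤ n := by omega
      have hIco : Finset.Ico 1 (t + 1) = insert t (Finset.Ico 1 t) := by
        ext x
        simp only [Finset.mem_insert, Finset.mem_Ico]
        omega
      have hk := ih (by omega)
      set k := ((Finset.Ico 1 t).image a).card with hkdef
      obtain ⟨h1, h2⟩ := ha t (Finset.mem_Icc.mpr ⟨hpos, htn⟩)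
      rw [hIco, Finset.image_insert, hk]
      rcases Nat.lt_or_ge (a t) (k + 1) with hle | hgt
      · have hmem : a t ∈ Finset.Icc 1 k := Finset.mem_Icc.mpr ⟨h1, by omega⟩
        rw [Finset.insert_eq_self.mpr hmem]
        simp
      · have heq : a t = k + 1 := by omega
        have : insert (a t) (Finset.Icc 1 k) = Finset.Icc 1 (k + 1) := by
          ext x
          simp only [Finset.mem_insert, Finset.mem_Icc, heq]
          omega
        rw [this]
        simp

/-- An address-independent trace is uniquely determined by its reuse-distance sequence. -/
theorem ai_determined_by_reuse_distance_sequence (n : ℕ) (a a' : ℕ → ℕ)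
    (ha : isAI a n) (ha' : isAI a' n)
    (h : ∀ t ∈ Finset.Icc 1 n, reuseDist a t = reuseDist a' t) :
    ∀ t ∈ Finset.Icc 1 n, a t = a' t := by
  intro t
  induction t using Nat.strong_induction_on with
  | _ t IH =>
    intro ht
    obtain ⟨ht1, htn⟩ := Finset.mem_Icc.mp ht
    -- prefix equality
    have hpre : ∀ s, 1 ≤ s → s < t → a s = a' s := fun s h1 h2 =>
      IH s h2 (Finset.mem_Icc.mpr ⟨h1, by omega⟩)
    have himg : (Finset.Ico 1 t).image a = (Finset.Ico 1 t).image a' := by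
      apply Finset.image_congr
      intro s hs
      obtain ⟨hs1, hs2⟩ := Finset.mem_Ico.mp hs
      exact hpre s hs1 hs2
    have hrd := h t ht
    by_cases hne : (prevSet a t).Nonempty
    · -- repeat access
      have hne' : (prevSet a' t).Nonempty := by
        by_contra hc
        rw [reuseDist, dif_pos hne, reuseDist, dif_neg hc] at hrd
        exact (ENat.coe_ne_top _) hrd
      set s := (prevSet a t).max' hne with hsdef
      set s' := (prevSet a' t).max' hne' with hs'def
      have hs : s ∈ prevSet a t := Finset.max'_mem _ _
      have hs' : s' ∈ prevSet a' t := Finset.max'_mem _ _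
      obtain ⟨hsIco, hsval⟩ := Finset.mem_filter.mp hs
      obtain ⟨hs1, hst⟩ := Finset.mem_Ico.mp hsIco
      obtain ⟨hs'Ico, hs'val⟩ := Finset.mem_filter.mp hs'
      obtain ⟨hs'1, hs't⟩ := Finset.mem_Ico.mp hs'Ico
      have hmax : ∀ r ∈ prevSet a t, r ≤ s := fun r hr => Finset.le_max' _ r hr
      have hmax' : ∀ r ∈ prevSet a' t, r ≤ s' := fun r hr => Finset.le_max' _ r hr
      -- reuse distances agree as naturals
      have hcard : ((Finset.Icc (s + 1) t).image a).card
          = ((Finset.Icc (s' + 1) t).image a').card := by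
        rw [reuseDist, dif_pos hne, reuseDist, dif_pos hne'] at hrd
        exact_mod_cast hrd
      -- split off t
      have hsplit : ∀ (b : ℕ → ℕ) (u : ℕ), u < t →
          b t ∉ (Finset.Icc (u + 1) (t - 1)).image b →
          ((Finset.Icc (u + 1) t).image b).card
            = ((Finset.Icc (u + 1) (t - 1)).image b).card + 1 := by
        intro b u hut hnm
        have : Finset.Icc (u + 1) t = insert t (Finset.Icc (u + 1) (t - 1)) := by
          ext x
          simp only [Finset.mem_insert, Finset.mem_Icc]
          omega
        rw [this, Finset.image_insert, Finset.card_insert_of_notMem hnm]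
      have hnm : a t ∉ (Finset.Icc (s + 1) (t - 1)).image a := by
        intro hm
        obtain ⟨r, hr, hrv⟩ := Finset.mem_image.mp hm
        obtain ⟨hr1, hr2⟩ := Finset.mem_Icc.mp hr
        have : r ∈ prevSet a t := Finset.mem_filter.mpr
          ⟨Finset.mem_Ico.mpr ⟨by omega, by omega⟩, hrv⟩
        have := hmax r this
        omega
      have hnm' : a' t ∉ (Finset.Icc (s' + 1) (t - 1)).image a' := by
        intro hm
        obtain ⟨r, hr, hrv⟩ := Finset.mem_image.mp hm
        obtain ⟨hr1, hr2⟩ := Finset.mem_Icc.mp hr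
        have : r ∈ prevSet a' t := Finset.mem_filter.mpr
          ⟨Finset.mem_Ico.mpr ⟨by omega, by omega⟩, hrv⟩
        have := hmax' r this
        omega
      -- convert a' window image to a
      have himg' : (Finset.Icc (s' + 1) (t - 1)).image a'
          = (Finset.Icc (s' + 1) (t - 1)).image a := by
        apply Finset.image_congr
        intro r hr
        obtain ⟨hr1, hr2⟩ := Finset.mem_Icc.mp hr
        exact (hpre r (by omega) (by omega)).symm
      have hf : ((Finset.Icc (s + 1) (t - 1)).image a).card
          = ((Finset.Icc (s' + 1) (t - 1)).image a).card := by
        have e1 := hsplit a s hst hnm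
        have e2 := hsplit a' s' hs't hnm'
        rw [e1, e2, himg'] at hcard
        omega
      -- last-occurrence properties
      have la : ∀ r, s < r → r < t → a r ≠ a s := by
        intro r hr1 hr2 hrv
        have : r ∈ prevSet a t := Finset.mem_filter.mpr
          ⟨Finset.mem_Ico.mpr ⟨by omega, hr2⟩, by rw [hrv, hsval]⟩
        have := hmax r this
        omega
      have la' : ∀ r, s' < r → r < t → a r ≠ a s' := by
        intro r hr1 hr2 hrv
        have hav : a' r ≠ a' s' := by
          intro hc
          have : r ∈ prevSet a' t := Finset.mem_filter.mpr
            ⟨Finset.mem_Ico.mpr ⟨by omega, hr2⟩, by rw [hc, hs'val]⟩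
          have := hmax' r this
          omega
        apply hav
        rw [← hpre r (by omega) hr2, ← hpre s' hs'1 hs't, hrv]
      -- strict monotonicity on last-occurrence positions
      have mono : ∀ u v : ℕ, u < v → v < t → (∀ r, v < r → r < t → a r ≠ a v) →
          ((Finset.Icc (v + 1) (t - 1)).image a).card
            < ((Finset.Icc (u + 1) (t - 1)).image a).card := by
        intro u v huv hvt hlo
        have hanm : a v ∉ (Finset.Icc (v + 1) (t - 1)).image a := by
          intro hm
          obtain ⟨r, hr, hrv⟩ := Finset.mem_image.mp hm
          obtain ⟨hr1, hr2⟩ := Finset.mem_Icc.mp hr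
          exact hlo r (by omega) (by omega) hrv
        have hsub : insert (a v) ((Finset.Icc (v + 1) (t - 1)).image a)
            ⊆ (Finset.Icc (u + 1) (t - 1)).image a := by
          intro x hx
          rcases Finset.mem_insert.mp hx with hx | hx
          · exact Finset.mem_image.mpr ⟨v, Finset.mem_Icc.mpr ⟨by omega, by omega⟩, hx.symm⟩
          · obtain ⟨r, hr, hrv⟩ := Finset.mem_image.mp hx
            obtain ⟨hr1, hr2⟩ := Finset.mem_Icc.mp hr
            exact Finset.mem_image.mpr ⟨r, Finset.mem_Icc.mpr ⟨by omega, hr2⟩, hrv⟩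
        have := Finset.card_le_card hsub
        rw [Finset.card_insert_of_notMem hanm] at this
        omega
      -- conclude s = s'
      have hss' : s = s' := by
        rcases lt_trichotomy s s' with hlt | heq | hgt
        · have := mono s s' hlt hs't la'
          omega
        · exact heq
        · have := mono s' s hgt hst la
          omega
      rw [← hsval, hss', hpre s' hs'1 hs't, hs'val]
    · -- first access
      have hne' : ¬ (prevSet a' t).Nonempty := by
        intro hc
        rw [reuseDist, dif_neg hne, reuseDist, dif_pos hc] at hrd
        exact (ENat.coe_ne_top _) hrd.symm
      have hnm : a t ∉ (Finset.Ico 1 t).image a := by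
        intro hm
        obtain ⟨r, hr, hrv⟩ := Finset.mem_image.mp hm
        exact hne ⟨r, Finset.mem_filter.mpr ⟨hr, hrv⟩⟩
      have hnm' : a' t ∉ (Finset.Ico 1 t).image a' := by
        intro hm
        obtain ⟨r, hr, hrv⟩ := Finset.mem_image.mp hm
        exact hne' ⟨r, Finset.mem_filter.mpr ⟨hr, hrv⟩⟩
      have hk := ai_image_eq_Icc a n ha t (by omega)
      have hk' := ai_image_eq_Icc a' n ha' t (by omega)
      obtain ⟨h1, h2⟩ := ha t ht
      obtain ⟨h1', h2'⟩ := ha' t ht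
      rw [hk] at hnm
      rw [hk'] at hnm'
      simp only [Finset.mem_Icc, not_and, not_le] at hnm hnm'
      have hcardeq : ((Finset.Ico 1 t).image a).card = ((Finset.Ico 1 t).image a').card := by
        rw [himg]
      have := hnm h1
      have := hnm' h1'
      omega
end

section
/- (Additive footprint formula) For every trace of length n with m distinct data items and every window length w with 1 ≤ w ≤ n, (n−w+1)·fp(w) = w·m + Σ_{i=1}^{n−1} min(i,w)·rt(i) − Σ_{e ∈ M} max(w − f_e, 0) − Σ_{e ∈ M} max(l_e − (n−w+1), 0). -/
open Finset

/- ===== auxiliary development ===== -/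

/-- Previous access to the same datum (0 if none). -/
def pA (a : ℕ → ℕ) (s : ℕ) : ℕ :=
  if h : (prevSet a s).Nonempty then (prevSet a s).max' h else 0

lemma mem_prevSet {a : ℕ → ℕ} {q s : ℕ} :
    q ∈ prevSet a s ↔ 1 ≤ q ∧ q < s ∧ a q = a s := by
  simp [prevSet, Finset.mem_filter, Finset.mem_Ico, and_assoc]

lemma pA_spec {a : ℕ → ℕ} {s : ℕ} (h : (prevSet a s).Nonempty) :
    1 ≤ pA a s ∧ pA a s < s ∧ a (pA a s) = a s := by
  rw [pA, dif_pos h]; exact mem_prevSet.1 ((prevSet a s).max'_mem h)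

lemma le_pA {a : ℕ → ℕ} {q s : ℕ} (hq : q ∈ prevSet a s) : q ≤ pA a s := by
  rw [pA, dif_pos ⟨q, hq⟩]; exact Finset.le_max' _ _ hq

lemma pA_of_empty {a : ℕ → ℕ} {s : ℕ} (h : ¬ (prevSet a s).Nonempty) : pA a s = 0 := by
  rw [pA, dif_neg h]

/-- Step A: the working-set size counts accesses that are first-in-window. -/
lemma wss_eq_card_filter (a : ℕ → ℕ) {t w : ℕ} (hw : 1 ≤ w) (ht : w ≤ t) :
    ((Finset.Icc (t - w + 1) t).filter (fun s => pA a s + w ≤ t)).card = wss a t w := by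
  unfold wss
  apply Finset.card_bij (fun s _ => a s)
  · intro s hs
    exact Finset.mem_image_of_mem a (Finset.mem_filter.1 hs).1
  · -- injectivity
    have key : ∀ s₁ ∈ (Finset.Icc (t - w + 1) t).filter (fun s => pA a s + w ≤ t),
        ∀ s₂ ∈ (Finset.Icc (t - w + 1) t).filter (fun s => pA a s + w ≤ t),
        s₁ < s₂ → a s₁ = a s₂ → False := by
      intro s₁ h₁ s₂ h₂ hlt heq
      obtain ⟨hm₁, _⟩ := Finset.mem_filter.1 h₁
      obtain ⟨hm₂, hp₂⟩ := Finset.mem_filter.1 h₂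
      rw [Finset.mem_Icc] at hm₁ hm₂
      have hq : s₁ ∈ prevSet a s₂ := mem_prevSet.2 ⟨by omega, hlt, heq⟩
      have := le_pA hq
      omega
    intro s₁ h₁ s₂ h₂ heq
    rcases lt_trichotomy s₁ s₂ with h | h | h
    · exact absurd heq (fun heq => key s₁ h₁ s₂ h₂ h heq)
    · exact h
    · exact absurd heq.symm (fun heq => key s₂ h₂ s₁ h₁ h heq)
  · -- surjectivity
    intro e he
    obtain ⟨s₀, hs₀, hs₀e⟩ := Finset.mem_image.1 he
    set F := (Finset.Icc (t - w + 1) t).filter (fun s => a s = e) with hF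
    have hFne : F.Nonempty := ⟨s₀, Finset.mem_filter.2 ⟨hs₀, hs₀e⟩⟩
    set s := F.min' hFne with hs
    have hsF : s ∈ F := F.min'_mem hFne
    obtain ⟨hsIcc, hse⟩ := Finset.mem_filter.1 hsF
    refine ⟨s, Finset.mem_filter.2 ⟨hsIcc, ?_⟩, hse⟩
    rw [Finset.mem_Icc] at hsIcc
    by_cases hne : (prevSet a s).Nonempty
    · by_contra hcon
      obtain ⟨hp1, hp2, hp3⟩ := pA_spec hne
      have hmem : pA a s ∈ F := Finset.mem_filter.2
        ⟨Finset.mem_Icc.2 ⟨by omega, by omega⟩, by rw [hp3, hse]⟩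
      have := F.min'_le _ hmem
      omega
    · rw [pA_of_empty hne]; omega

/-- Step B: swap summation order. -/
lemma sum_wss_eq (a : ℕ → ℕ) {n w : ℕ} (hw1 : 1 ≤ w) (hwn : w ≤ n) :
    ∑ t ∈ Finset.Icc w n, wss a t w
      = ∑ s ∈ Finset.Icc 1 n,
          (Finset.Icc (max s (pA a s + w)) (min (s + w - 1) n)).card := by
  have step1 : ∑ t ∈ Finset.Icc w n, wss a t w
      = ∑ t ∈ Finset.Icc w n, ∑ s ∈ Finset.Icc 1 n,
          (if t - w + 1 ≤ s ∧ s ≤ t ∧ pA a s + w ≤ t then 1 else 0) := by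
    apply Finset.sum_congr rfl
    intro t ht
    rw [Finset.mem_Icc] at ht
    rw [← wss_eq_card_filter a hw1 ht.1]
    have hset : (Finset.Icc (t - w + 1) t).filter (fun s => pA a s + w ≤ t)
        = (Finset.Icc 1 n).filter (fun s => t - w + 1 ≤ s ∧ s ≤ t ∧ pA a s + w ≤ t) := by
      ext s
      simp only [Finset.mem_filter, Finset.mem_Icc]
      constructor
      · rintro ⟨⟨h1, h2⟩, h3⟩; exact ⟨⟨by omega, by omega⟩, h1, h2, h3⟩
      · rintro ⟨_, h1, h2, h3⟩; exact ⟨⟨h1, h2⟩, h3⟩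
    rw [hset, Finset.card_filter]
  rw [step1, Finset.sum_comm]
  apply Finset.sum_congr rfl
  intro s hs
  rw [Finset.mem_Icc] at hs
  rw [← Finset.card_filter]
  congr 1
  ext t
  simp only [Finset.mem_filter, Finset.mem_Icc]
  omega
/-- end-boundary penalty -/
def dZ (n w x : ℕ) : ℤ := max ((x : ℤ) - ((n : ℤ) - w + 1)) 0

/-- per-access main contribution -/
noncomputable def cZ (a : ℕ → ℕ) (w s : ℕ) : ℤ :=
  if (prevSet a s).Nonempty then min ((s : ℤ) - (pA a s : ℤ)) w
  else (w : ℤ) - max ((w : ℤ) - s) 0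

/-- Step C: the per-access window count. -/
lemma card_window (a : ℕ → ℕ) {n w s : ℕ} (hw1 : 1 ≤ w) (hwn : w ≤ n)
    (hs1 : 1 ≤ s) (hsn : s ≤ n) :
    ((Finset.Icc (max s (pA a s + w)) (min (s + w - 1) n)).card : ℤ)
      = cZ a w s - dZ n w s + dZ n w (pA a s) := by
  rw [Nat.card_Icc, cZ, dZ, dZ]
  by_cases h : (prevSet a s).Nonempty
  · obtain ⟨hp1, hp2, _⟩ := pA_spec h
    rw [if_pos h]
    omega
  · rw [if_neg h, pA_of_empty h]
    omega
lemma firstAcc_mem {a : ℕ → ℕ} {n e : ℕ} (he : e ∈ dataSet a n) :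
    firstAcc a n e ∈ Finset.Icc 1 n ∧ a (firstAcc a n e) = e := by
  obtain ⟨s, hs, hse⟩ := Finset.mem_image.1 he
  exact Nat.sInf_mem (⟨s, hs, hse⟩ : {t | t ∈ Finset.Icc 1 n ∧ a t = e}.Nonempty)

lemma firstAcc_prevSet_empty {a : ℕ → ℕ} {n e : ℕ} (he : e ∈ dataSet a n) :
    ¬ (prevSet a (firstAcc a n e)).Nonempty := by
  rintro ⟨q, hq⟩
  obtain ⟨hq1, hq2, hq3⟩ := mem_prevSet.1 hq
  obtain ⟨hf1, hf2⟩ := firstAcc_mem he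
  rw [Finset.mem_Icc] at hf1
  have hqmem : q ∈ {t | t ∈ Finset.Icc 1 n ∧ a t = e} :=
    ⟨Finset.mem_Icc.2 ⟨hq1, by omega⟩, by rw [hq3, hf2]⟩
  have := Nat.sInf_le hqmem
  rw [firstAcc] at hq2
  omega

lemma firstAcc_of_first {a : ℕ → ℕ} {n s : ℕ} (hs : s ∈ Finset.Icc 1 n)
    (h : ¬ (prevSet a s).Nonempty) : firstAcc a n (a s) = s := by
  have hmem : s ∈ {t | t ∈ Finset.Icc 1 n ∧ a t = a s} := ⟨hs, rfl⟩
  have hle : sInf {t | t ∈ Finset.Icc 1 n ∧ a t = a s} ≤ s := Nat.sInf_le hmem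
  have hin := Nat.sInf_mem (⟨s, hmem⟩ : {t | t ∈ Finset.Icc 1 n ∧ a t = a s}.Nonempty)
  rw [firstAcc]
  rcases eq_or_lt_of_le hle with heq | hlt
  · exact heq
  · exfalso
    obtain ⟨hin1, hin2⟩ := hin
    rw [Finset.mem_Icc] at hin1
    exact h ⟨_, mem_prevSet.2 ⟨hin1.1, hlt, hin2⟩⟩

lemma lastAcc_mem {a : ℕ → ℕ} {n e : ℕ} (he : e ∈ dataSet a n) :
    lastAcc a n e ∈ Finset.Icc 1 n ∧ a (lastAcc a n e) = e := by
  obtain ⟨s, hs, hse⟩ := Finset.mem_image.1 he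
  refine Nat.sSup_mem (⟨s, hs, hse⟩ : {t | t ∈ Finset.Icc 1 n ∧ a t = e}.Nonempty) ⟨n, ?_⟩
  rintro t ⟨ht, -⟩
  exact (Finset.mem_Icc.1 ht).2

lemma lastAcc_last {a : ℕ → ℕ} {n e u : ℕ} (he : e ∈ dataSet a n)
    (hu1 : lastAcc a n e < u) (hu2 : u ≤ n) : a u ≠ e := by
  intro hue
  have hbdd : BddAbove {t | t ∈ Finset.Icc 1 n ∧ a t = e} := by
    refine ⟨n, ?_⟩; rintro t ⟨ht, -⟩; exact (Finset.mem_Icc.1 ht).2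
  have : u ≤ sSup {t | t ∈ Finset.Icc 1 n ∧ a t = e} :=
    le_csSup hbdd ⟨Finset.mem_Icc.2 ⟨by omega, hu2⟩, hue⟩
  rw [lastAcc] at hu1
  omega

lemma lastAcc_of_last {a : ℕ → ℕ} {n q : ℕ} (hq : q ∈ Finset.Icc 1 n)
    (h : ∀ u, q < u → u ≤ n → a u ≠ a q) : lastAcc a n (a q) = q := by
  have hbdd : BddAbove {t | t ∈ Finset.Icc 1 n ∧ a t = a q} := by
    refine ⟨n, ?_⟩; rintro t ⟨ht, -⟩; exact (Finset.mem_Icc.1 ht).2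
  have hmem : q ∈ {t | t ∈ Finset.Icc 1 n ∧ a t = a q} := ⟨hq, rfl⟩
  have hle : q ≤ sSup {t | t ∈ Finset.Icc 1 n ∧ a t = a q} := le_csSup hbdd hmem
  have hin := Nat.sSup_mem (⟨q, hmem⟩ : Set.Nonempty _) hbdd
  rw [lastAcc]
  rcases eq_or_lt_of_le hle with heq | hlt
  · exact heq.symm
  · exfalso
    obtain ⟨hin1, hin2⟩ := hin
    rw [Finset.mem_Icc] at hin1
    exact h _ hlt hin1.2 hin2
/-- Next access to the same datum. -/
noncomputable def nextAcc (a : ℕ → ℕ) (n q : ℕ) : ℕ :=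
  sInf {u | u ∈ Finset.Icc 1 n ∧ q < u ∧ a u = a q}

lemma nextAcc_mem {a : ℕ → ℕ} {n q : ℕ}
    (h : {u | u ∈ Finset.Icc 1 n ∧ q < u ∧ a u = a q}.Nonempty) :
    nextAcc a n q ∈ Finset.Icc 1 n ∧ q < nextAcc a n q ∧ a (nextAcc a n q) = a q :=
  Nat.sInf_mem h

lemma pA_nextAcc {a : ℕ → ℕ} {n q : ℕ} (hq : q ∈ Finset.Icc 1 n)
    (h : {u | u ∈ Finset.Icc 1 n ∧ q < u ∧ a u = a q}.Nonempty) :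
    pA a (nextAcc a n q) = q := by
  obtain ⟨hs1, hs2, hs3⟩ := nextAcc_mem h
  rw [Finset.mem_Icc] at hq hs1
  have hqp : q ∈ prevSet a (nextAcc a n q) := mem_prevSet.2 ⟨hq.1, hs2, hs3.symm⟩
  have hle : q ≤ pA a (nextAcc a n q) := le_pA hqp
  obtain ⟨hp1, hp2, hp3⟩ := pA_spec ⟨q, hqp⟩
  rcases eq_or_lt_of_le hle with heq | hlt
  · exact heq.symm
  · exfalso
    have hmem : pA a (nextAcc a n q) ∈ {u | u ∈ Finset.Icc 1 n ∧ q < u ∧ a u = a q} :=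
      ⟨Finset.mem_Icc.2 ⟨hp1, by omega⟩, hlt, by rw [hp3, hs3]⟩
    have hle2 : nextAcc a n q ≤ pA a (nextAcc a n q) := Nat.sInf_le hmem
    omega

lemma nextAcc_pA {a : ℕ → ℕ} {n s : ℕ} (hs : s ∈ Finset.Icc 1 n)
    (h : (prevSet a s).Nonempty) : nextAcc a n (pA a s) = s := by
  obtain ⟨hp1, hp2, hp3⟩ := pA_spec h
  have hmem : s ∈ {u | u ∈ Finset.Icc 1 n ∧ pA a s < u ∧ a u = a (pA a s)} :=
    ⟨hs, hp2, hp3.symm⟩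
  have hle : nextAcc a n (pA a s) ≤ s := Nat.sInf_le hmem
  have hin := Nat.sInf_mem (⟨s, hmem⟩ : Set.Nonempty _)
  obtain ⟨hin1, hin2, hin3⟩ := hin
  rw [Finset.mem_Icc] at hin1
  rw [nextAcc] at hle ⊢
  rcases eq_or_lt_of_le hle with heq | hlt
  · exact heq
  · exfalso
    have : sInf {u | u ∈ Finset.Icc 1 n ∧ pA a s < u ∧ a u = a (pA a s)} ∈ prevSet a s :=
      mem_prevSet.2 ⟨hin1.1, hlt, by rw [hin3, hp3]⟩
    have := le_pA this
    omega

/-- D3: sum of `dZ ∘ pA` over reused accesses equals sum of `dZ` over non-last accesses. -/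
lemma sum_dZ_pA (a : ℕ → ℕ) (n w : ℕ) :
    ∑ s ∈ (Finset.Icc 1 n).filter (fun s => (prevSet a s).Nonempty), dZ n w (pA a s)
      = ∑ q ∈ (Finset.Icc 1 n).filter (fun q => ¬ ∀ u ∈ Finset.Ioc q n, a u ≠ a q),
          dZ n w q := by
  apply Finset.sum_nbij' (fun s => pA a s) (fun q => nextAcc a n q)
  · intro s hs
    obtain ⟨hs1, hs2⟩ := Finset.mem_filter.1 hs
    rw [Finset.mem_Icc] at hs1
    obtain ⟨hp1, hp2, hp3⟩ := pA_spec hs2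
    refine Finset.mem_filter.2 ⟨Finset.mem_Icc.2 ⟨hp1, by omega⟩, ?_⟩
    push_neg
    exact ⟨s, Finset.mem_Ioc.2 ⟨hp2, hs1.2⟩, hp3.symm⟩
  · intro q hq
    obtain ⟨hq1, hq2⟩ := Finset.mem_filter.1 hq
    push_neg at hq2
    obtain ⟨u, hu1, hu2⟩ := hq2
    rw [Finset.mem_Ioc] at hu1
    rw [Finset.mem_Icc] at hq1
    have hne : {u | u ∈ Finset.Icc 1 n ∧ q < u ∧ a u = a q}.Nonempty :=
      ⟨u, Finset.mem_Icc.2 ⟨by omega, hu1.2⟩, hu1.1, hu2⟩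
    obtain ⟨hs1, hs2, hs3⟩ := nextAcc_mem hne
    refine Finset.mem_filter.2 ⟨hs1, ⟨q, mem_prevSet.2 ⟨hq1.1, hs2, hs3.symm⟩⟩⟩
  · intro s hs
    obtain ⟨hs1, hs2⟩ := Finset.mem_filter.1 hs
    exact nextAcc_pA hs1 hs2
  · intro q hq
    obtain ⟨hq1, hq2⟩ := Finset.mem_filter.1 hq
    push_neg at hq2
    obtain ⟨u, hu1, hu2⟩ := hq2
    rw [Finset.mem_Ioc] at hu1
    have hq1' := Finset.mem_Icc.1 hq1
    have hne : {u | u ∈ Finset.Icc 1 n ∧ q < u ∧ a u = a q}.Nonempty :=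
      ⟨u, Finset.mem_Icc.2 ⟨by omega, hu1.2⟩, hu1.1, hu2⟩
    exact pA_nextAcc hq1 hne
  · intro s hs
    rfl

/-- D2: sum of `cZ` over reused accesses equals the reuse-time histogram sum. -/
lemma sum_cZ_reused (a : ℕ → ℕ) (n w : ℕ) :
    ∑ s ∈ (Finset.Icc 1 n).filter (fun s => (prevSet a s).Nonempty), cZ a w s
      = ∑ i ∈ Finset.Icc 1 (n - 1), ((min i w : ℕ) : ℤ) * rtHist a n i := by
  have hmaps : ∀ s ∈ (Finset.Icc 1 n).filter (fun s => (prevSet a s).Nonempty),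
      s - pA a s ∈ Finset.Icc 1 (n - 1) := by
    intro s hs
    obtain ⟨hs1, hs2⟩ := Finset.mem_filter.1 hs
    rw [Finset.mem_Icc] at hs1
    obtain ⟨hp1, hp2, _⟩ := pA_spec hs2
    rw [Finset.mem_Icc]
    omega
  rw [← Finset.sum_fiberwise_of_maps_to hmaps (cZ a w)]
  apply Finset.sum_congr rfl
  intro i hi
  rw [Finset.mem_Icc] at hi
  have hval : ∀ s ∈ ((Finset.Icc 1 n).filter
      (fun s => (prevSet a s).Nonempty)).filter (fun s => s - pA a s = i),
      cZ a w s = ((min i w : ℕ) : ℤ) := by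
    intro s hs
    obtain ⟨hs', hsi⟩ := Finset.mem_filter.1 hs
    obtain ⟨_, hs2⟩ := Finset.mem_filter.1 hs'
    obtain ⟨hp1, hp2, _⟩ := pA_spec hs2
    rw [cZ, if_pos hs2]
    have : (s : ℤ) - (pA a s : ℤ) = (i : ℤ) := by omega
    rw [this]
    omega
  rw [Finset.sum_congr rfl hval, Finset.sum_const, nsmul_eq_mul]
  have hcard : rtHist a n i
      = (((Finset.Icc 1 n).filter (fun s => (prevSet a s).Nonempty)).filter
          (fun s => s - pA a s = i)).card := by
    unfold rtHist
    rw [Finset.filter_filter]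
    congr 1
    ext t
    simp only [Finset.mem_filter, Finset.mem_Icc]
    constructor
    · rintro ⟨ht, hrt⟩
      by_cases hne : (prevSet a t).Nonempty
      · refine ⟨ht, hne, ?_⟩
        rw [reuseTime, dif_pos hne] at hrt
        have hpa : pA a t = (prevSet a t).max' hne := by rw [pA, dif_pos hne]
        rw [← hpa] at hrt
        exact_mod_cast hrt
      · exfalso
        rw [reuseTime, dif_neg hne] at hrt
        exact (ENat.top_ne_coe i) hrt
    · rintro ⟨ht, hne, hti⟩
      refine ⟨ht, ?_⟩
      rw [reuseTime, dif_pos hne]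
      have hpa : pA a t = (prevSet a t).max' hne := by rw [pA, dif_pos hne]
      rw [← hpa, hti]
  rw [hcard]
  ring

/-- D1: sum of `cZ` over first accesses. -/
lemma sum_cZ_first (a : ℕ → ℕ) (n w : ℕ) :
    ∑ s ∈ (Finset.Icc 1 n).filter (fun s => ¬ (prevSet a s).Nonempty), cZ a w s
      = ∑ e ∈ dataSet a n, ((w : ℤ) - max ((w : ℤ) - (firstAcc a n e : ℤ)) 0) := by
  apply Finset.sum_nbij' a (firstAcc a n)
  · intro s hs
    exact Finset.mem_image_of_mem a (Finset.mem_filter.1 hs).1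
  · intro e he
    exact Finset.mem_filter.2 ⟨(firstAcc_mem he).1, firstAcc_prevSet_empty he⟩
  · intro s hs
    obtain ⟨hs1, hs2⟩ := Finset.mem_filter.1 hs
    exact firstAcc_of_first hs1 hs2
  · intro e he
    exact (firstAcc_mem he).2
  · intro s hs
    obtain ⟨hs1, hs2⟩ := Finset.mem_filter.1 hs
    rw [cZ, if_neg hs2, firstAcc_of_first hs1 hs2]

/-- D4: sum of `dZ` over last accesses. -/
lemma sum_dZ_last (a : ℕ → ℕ) (n w : ℕ) :
    ∑ q ∈ (Finset.Icc 1 n).filter (fun q => ∀ u ∈ Finset.Ioc q n, a u ≠ a q), dZ n w q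
      = ∑ e ∈ dataSet a n, dZ n w (lastAcc a n e) := by
  apply Finset.sum_nbij' a (lastAcc a n)
  · intro s hs
    exact Finset.mem_image_of_mem a (Finset.mem_filter.1 hs).1
  · intro e he
    refine Finset.mem_filter.2 ⟨(lastAcc_mem he).1, ?_⟩
    intro u hu
    rw [Finset.mem_Ioc] at hu
    rw [(lastAcc_mem he).2]
    exact lastAcc_last he hu.1 hu.2
  · intro q hq
    obtain ⟨hq1, hq2⟩ := Finset.mem_filter.1 hq
    exact lastAcc_of_last hq1 (fun u h1 h2 => hq2 u (Finset.mem_Ioc.2 ⟨h1, h2⟩))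
  · intro e he
    exact (lastAcc_mem he).2
  · intro q hq
    obtain ⟨hq1, hq2⟩ := Finset.mem_filter.1 hq
    rw [lastAcc_of_last hq1 (fun u h1 h2 => hq2 u (Finset.mem_Ioc.2 ⟨h1, h2⟩))]

/-- The key combinatorial identity over ℤ. -/
lemma key_identity (a : ℕ → ℕ) {n w : ℕ} (hw1 : 1 ≤ w) (hwn : w ≤ n) :
    (∑ t ∈ Finset.Icc w n, (wss a t w : ℤ))
      = (w : ℤ) * (dataSet a n).card
        + ∑ i ∈ Finset.Icc 1 (n - 1), ((min i w : ℕ) : ℤ) * rtHist a n i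
        - ∑ e ∈ dataSet a n, max ((w : ℤ) - (firstAcc a n e : ℤ)) 0
        - ∑ e ∈ dataSet a n, max ((lastAcc a n e : ℤ) - ((n : ℤ) - (w : ℤ) + 1)) 0 := by
  have h0 : (∑ t ∈ Finset.Icc w n, (wss a t w : ℤ))
      = ∑ s ∈ Finset.Icc 1 n,
          ((Finset.Icc (max s (pA a s + w)) (min (s + w - 1) n)).card : ℤ) := by
    rw [← Nat.cast_sum, sum_wss_eq a hw1 hwn, Nat.cast_sum]
  rw [h0]
  have h1 : ∀ s ∈ Finset.Icc 1 n,
      ((Finset.Icc (max s (pA a s + w)) (min (s + w - 1) n)).card : ℤ)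
        = cZ a w s - dZ n w s + dZ n w (pA a s) := by
    intro s hs
    rw [Finset.mem_Icc] at hs
    exact card_window a hw1 hwn hs.1 hs.2
  rw [Finset.sum_congr rfl h1, Finset.sum_add_distrib, Finset.sum_sub_distrib]
  -- split the cZ sum
  have ec : ∑ s ∈ Finset.Icc 1 n, cZ a w s
      = (∑ i ∈ Finset.Icc 1 (n - 1), ((min i w : ℕ) : ℤ) * rtHist a n i)
        + ((w : ℤ) * (dataSet a n).card
            - ∑ e ∈ dataSet a n, max ((w : ℤ) - (firstAcc a n e : ℤ)) 0) := by
    rw [← Finset.sum_filter_add_sum_filter_not (Finset.Icc 1 n)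
      (fun s => (prevSet a s).Nonempty) (cZ a w)]
    rw [sum_cZ_reused a n w, sum_cZ_first a n w, Finset.sum_sub_distrib,
      Finset.sum_const, nsmul_eq_mul, mul_comm]
  -- split the dZ sum
  have ed : ∑ s ∈ Finset.Icc 1 n, dZ n w s
      = (∑ q ∈ (Finset.Icc 1 n).filter (fun q => ¬ ∀ u ∈ Finset.Ioc q n, a u ≠ a q),
            dZ n w q)
        + ∑ e ∈ dataSet a n, max ((lastAcc a n e : ℤ) - ((n : ℤ) - (w : ℤ) + 1)) 0 := by
    rw [← Finset.sum_filter_add_sum_filter_not (Finset.Icc 1 n)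
      (fun q => ∀ u ∈ Finset.Ioc q n, a u ≠ a q) (dZ n w), sum_dZ_last a n w]
    rw [add_comm]
    rfl
  -- the dZ∘pA sum
  have ep : ∑ s ∈ Finset.Icc 1 n, dZ n w (pA a s)
      = ∑ q ∈ (Finset.Icc 1 n).filter (fun q => ¬ ∀ u ∈ Finset.Ioc q n, a u ≠ a q),
          dZ n w q := by
    rw [← Finset.sum_filter_add_sum_filter_not (Finset.Icc 1 n)
      (fun s => (prevSet a s).Nonempty) (fun s => dZ n w (pA a s))]
    rw [sum_dZ_pA a n w]
    have hz : ∑ s ∈ (Finset.Icc 1 n).filter (fun s => ¬ (prevSet a s).Nonempty),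
        dZ n w (pA a s) = 0 := by
      apply Finset.sum_eq_zero
      intro s hs
      rw [pA_of_empty (Finset.mem_filter.1 hs).2, dZ]
      have : (n : ℤ) - w + 1 ≥ 0 := by
        have : (w : ℤ) ≤ n := by exact_mod_cast hwn
        omega
      omega
    rw [hz, add_zero]
  rw [ec, ed, ep]
  ring
/-- The additive footprint formula. -/
theorem additive_footprint_formula (n m w : ℕ) (a : ℕ → ℕ)
    (hm : (dataSet a n).card = m) (hw1 : 1 ≤ w) (hwn : w ≤ n) :
    ((n : ℚ) - (w : ℚ) + 1) * fp a n w
      = (w : ℚ) * m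
        + ∑ i ∈ Finset.Icc 1 (n - 1), ((min i w : ℕ) : ℚ) * (rtHist a n i : ℚ)
        - ∑ e ∈ dataSet a n, max ((w : ℚ) - (firstAcc a n e : ℚ)) 0
        - ∑ e ∈ dataSet a n, max ((lastAcc a n e : ℚ) - ((n : ℚ) - (w : ℚ) + 1)) 0 := by
  subst hm
  have hwq : (w : ℚ) ≤ n := by exact_mod_cast hwn
  have hden : (n : ℚ) - (w : ℚ) + 1 ≠ 0 := by
    have : (0 : ℚ) < (n : ℚ) - w + 1 := by linarith
    exact this.ne'
  rw [fp, mul_comm, div_mul_cancel₀ _ hden]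
  have hcast : (∑ t ∈ Finset.Icc w n, (wss a t w : ℚ))
      = ((∑ t ∈ Finset.Icc w n, (wss a t w : ℤ) : ℤ) : ℚ) := by
    push_cast
    rfl
  rw [hcast, key_identity a hw1 hwn]
  push_cast [Int.cast_max]
  ring
end
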